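/- arXiv:1802.02676 — 3 statements merged into one kernel-verified Lean document; each statement's English description precedes it below -/
import Mathlib

section
/- For all nonnegative integers r and s, in GL₃(ℤ_p) one has x_{12}^{-p^r} · x_{1122}^{p^s} · x_{12}^{p^r} · x_{1122}^{-p^s} = x_{12}^{p^r·((1+p)^{2p^s} − 1)}, where the exponent p^r·((1+p)^{2p^s} − 1) is a natural number. -/
/-!
Conjugation by `diag(a, b, 1)` multiplies the `(0, 1)` entry of a transvection by `a / b`.
For `x1122 ^ p ^ s` this ratio is `(1 + p) ^ (2 * p ^ s) =: M`, so `x1122 ^ p ^ s` conjugates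
`x12 ^ p ^ r` to `x12 ^ (p ^ r * M)`, and the commutator is `x12 ^ (p ^ r * M - p ^ r)`.
-/

namespace Matrix

variable {n R : Type*} [Fintype n] [DecidableEq n] [CommRing R] {i j : n}

theorem transvection_pow (hij : i ≠ j) (c : R) (k : ℕ) :
    transvection i j c ^ k = transvection i j (k * c) := by
  induction k with
  | zero => simp
  | succ k ih => rw [pow_succ, ih, transvection_mul_transvection_same i j hij]; push_cast; ring_nf

theorem diagonal_mul_transvection (d : n → R) {c c' : R} (h : d i * c = c' * d j) :
    diagonal d * transvection i j c = transvection i j c' * diagonal d := by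
  rw [transvection, transvection, Matrix.mul_add, Matrix.add_mul, mul_one, one_mul]
  congr 1
  ext a b
  by_cases hab : i = a ∧ j = b
  · obtain ⟨rfl, rfl⟩ := hab
    simpa [diagonal_mul, mul_diagonal] using h
  · simp [diagonal_mul, mul_diagonal, hab]

theorem diagonal_mul_transvection_pow (hij : i ≠ j) (d : n → R) (c : R) {M : ℕ}
    (hM : d i = M * d j) (k : ℕ) :
    diagonal d * transvection i j c ^ k = transvection i j c ^ (k * M) * diagonal d := by
  rw [transvection_pow hij, transvection_pow hij]
  exact diagonal_mul_transvection d (by rw [hM]; push_cast; ring)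

end Matrix

theorem stmt_3_general (p : ℕ) [Fact p.Prime]
    (x12 x1122 : GL (Fin 3) ℤ_[p])
    (u : ℤ_[p]ˣ) (hu : (u : ℤ_[p]) = 1 + p)
    (h12 : (x12 : Matrix (Fin 3) (Fin 3) ℤ_[p]) = 1 + Matrix.single 0 1 (p : ℤ_[p]))
    (h1122 : (x1122 : Matrix (Fin 3) (Fin 3) ℤ_[p]) = Matrix.diagonal ![(u : ℤ_[p]), (↑u⁻¹ : ℤ_[p]), 1])
    (r s : ℕ) :
    (x12 ^ p ^ r)⁻¹ * x1122 ^ p ^ s * x12 ^ p ^ r * (x1122 ^ p ^ s)⁻¹ = x12 ^ (p ^ r * ((1 + p) ^ (2 * p ^ s) - 1)) := by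
  set M := (1 + p) ^ (2 * p ^ s)
  have hD : ((x1122 ^ p ^ s : GL (Fin 3) ℤ_[p]) : Matrix (Fin 3) (Fin 3) ℤ_[p]) =
      Matrix.diagonal ![(u : ℤ_[p]) ^ p ^ s, (↑u⁻¹ : ℤ_[p]) ^ p ^ s, 1] := by
    rw [Units.val_pow_eq_pow_val, h1122, Matrix.diagonal_pow]
    congr 1
    funext i
    fin_cases i <;> simp
  have hratio : (u : ℤ_[p]) ^ p ^ s = M * (↑u⁻¹ : ℤ_[p]) ^ p ^ s := by
    rw [show (M : ℤ_[p]) = (u : ℤ_[p]) ^ (p ^ s + p ^ s) by push_cast [M, hu]; ring_nf,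
      pow_add, mul_assoc, ← mul_pow, Units.mul_inv, one_pow, mul_one]
  have hconj : x1122 ^ p ^ s * x12 ^ p ^ r = x12 ^ (p ^ r * M) * x1122 ^ p ^ s := by
    ext1
    simp only [Units.val_mul, Units.val_pow_eq_pow_val, hD, h12]
    exact Matrix.diagonal_mul_transvection_pow (by decide) _ _ hratio _
  have hexp : p ^ r * M = p ^ r + p ^ r * (M - 1) := by
    rw [add_comm, ← Nat.mul_add_one, Nat.sub_add_cancel (Nat.one_le_pow _ _ (by omega))]
  rw [mul_assoc _ (x1122 ^ p ^ s), hconj, hexp, pow_add, mul_assoc, mul_assoc, mul_inv_cancel,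
    mul_one, inv_mul_cancel_left]

theorem stmt_3 (p : ℕ) [Fact p.Prime] (hp : p ≠ 2)
    (x12 x1122 : GL (Fin 3) ℤ_[p])
    (u : ℤ_[p]ˣ) (hu : (u : ℤ_[p]) = 1 + p)
    (h12 : (x12 : Matrix (Fin 3) (Fin 3) ℤ_[p]) = 1 + Matrix.single 0 1 (p : ℤ_[p]))
    (h1122 : (x1122 : Matrix (Fin 3) (Fin 3) ℤ_[p]) = Matrix.diagonal ![(u : ℤ_[p]), (↑u⁻¹ : ℤ_[p]), 1])
    (r s : ℕ) :
    (x12 ^ p ^ r)⁻¹ * x1122 ^ p ^ s * x12 ^ p ^ r * (x1122 ^ p ^ s)⁻¹ = x12 ^ (p ^ r * ((1 + p) ^ (2 * p ^ s) - 1)) :=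
  stmt_3_general p x12 x1122 u hu h12 h1122 r s
end

section
/- For every integer k ≥ 2, the inverse in ℤ_p of the unit 1 + p^k lies in the topological closure of the set {(1+p)^n : n ∈ ℕ} in ℤ_p; that is, (1+p^k)^{-1} is a limit of a sequence of natural-number powers of 1+p. -/
/-!
For odd `p`, `(1 + p) ^ p ^ m = 1 + p ^ (m + 1) c` with `c ≡ 1 mod p`, so multiplying `(1 + p) ^ n`
by `(1 + p) ^ (p ^ m * j)` shifts it by `p ^ (m + 1) j` modulo `p ^ (m + 2)`. Choosing the digits `j`
one at a time, powers of `1 + p` approximate every `y ≡ 1 mod p` to any `p`-adic precision, and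
`(1 + p ^ k)⁻¹ ≡ 1 mod p`.
-/

lemma exists_one_add_prime_pow_prime_pow_eq {R : Type*} [CommSemiring R] {p : ℕ} (hp : p.Prime)
    (hp2 : p ≠ 2) (m : ℕ) : ∃ c : R, (1 + p) ^ p ^ m = 1 + p ^ (m + 1) * (1 + p * c) := by
  obtain ⟨c, hc⟩ := ZMod.exists_one_add_mul_pow_prime_pow_eq (R := R) (u := p) (v := p) hp dvd_rfl
    (by rw [← pow_three']; exact pow_dvd_pow _ (hp.two_le.lt_of_ne' hp2)) 1 m
  exact ⟨c, by rw [mul_one] at hc; rw [hc, pow_succ]⟩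

namespace PadicInt

variable {p : ℕ} [Fact p.Prime]

lemma exists_dvd_add_natCast (t : ℤ_[p]) : ∃ j : ℕ, (p : ℤ_[p]) ∣ t + j := by
  obtain ⟨j, -, hj⟩ := exists_mem_range (-t)
  rw [maximalIdeal_eq_span_p, Ideal.mem_span_singleton] at hj
  exact ⟨j, by simpa [add_comm] using hj.neg_right⟩

lemma mem_closure_of_forall_exists_pow_dvd_sub {s : Set ℤ_[p]} {y : ℤ_[p]}
    (h : ∀ m : ℕ, ∃ x ∈ s, (p : ℤ_[p]) ^ m ∣ x - y) : y ∈ closure s := by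
  refine Metric.mem_closure_iff.mpr fun ε hε => ?_
  obtain ⟨m, hm⟩ := exists_pow_neg_lt p hε
  obtain ⟨x, hx, hdvd⟩ := h m
  refine ⟨x, hx, lt_of_le_of_lt ?_ hm⟩
  rwa [dist_comm, dist_eq_norm, norm_le_pow_iff_mem_span_pow, Ideal.mem_span_singleton]

lemma exists_one_add_prime_pow_sub_dvd_succ (hp2 : p ≠ 2) {y : ℤ_[p]} (hy : (p : ℤ_[p]) ∣ y - 1)
    {m n : ℕ} (hn : (p : ℤ_[p]) ^ (m + 1) ∣ (1 + p) ^ n - y) :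
    ∃ n' : ℕ, (p : ℤ_[p]) ^ (m + 2) ∣ (1 + p) ^ n' - y := by
  obtain ⟨t, ht⟩ := hn
  obtain ⟨w, hw⟩ := hy
  obtain ⟨c, hc⟩ := exists_one_add_prime_pow_prime_pow_eq (R := ℤ_[p]) Fact.out hp2 m
  obtain ⟨j, s, hs⟩ := exists_dvd_add_natCast t
  set Q : ℤ_[p] := p ^ (m + 1) * (1 + p * c)
  obtain ⟨e, he⟩ := sq_dvd_add_pow_sub_sub Q 1 j
  simp only [one_pow, one_mul] at he
  -- expand `(y + p ^ (m + 1) t) (1 + Q j + Q ^ 2 e) - y` using `y = 1 + p w` and `t + j = p s`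
  refine ⟨n + p ^ m * j, s + (w + c + p * w * c) * j
    + p ^ m * ((1 + p * c) ^ 2 * (y * e + p ^ (m + 1) * t * e) + t * (1 + p * c) * j), ?_⟩
  rw [pow_add, pow_mul, hc]
  linear_combination (1 + Q) ^ j * ht + (y + p ^ (m + 1) * t) * he + Q * j * hw + p ^ (m + 1) * hs

lemma exists_one_add_prime_pow_sub_dvd (hp2 : p ≠ 2) {y : ℤ_[p]} (hy : (p : ℤ_[p]) ∣ y - 1)
    (m : ℕ) :
    ∃ n : ℕ, (p : ℤ_[p]) ^ (m + 1) ∣ (1 + p) ^ n - y := by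
  induction m with
  | zero => exact ⟨0, by simpa using (dvd_sub_comm).mp hy⟩
  | succ m ih =>
    obtain ⟨n, hn⟩ := ih
    exact exists_one_add_prime_pow_sub_dvd_succ hp2 hy hn

end PadicInt

theorem stmt_11 (p : ℕ) [Fact p.Prime] (hp : p ≠ 2) (k : ℕ) (hk : 2 ≤ k)
    (v : ℤ_[p]ˣ) (hv : (v : ℤ_[p]) = 1 + (p : ℤ_[p]) ^ k) :
    (↑v⁻¹ : ℤ_[p]) ∈ closure (Set.range fun n : ℕ => ((1 + p : ℤ_[p]) ^ n)) := by
  have hinv : (↑v⁻¹ : ℤ_[p]) - 1 = -(↑v⁻¹ * (p : ℤ_[p]) ^ k) := by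
    linear_combination v.inv_mul - (↑v⁻¹ : ℤ_[p]) * hv
  have hy : (p : ℤ_[p]) ∣ (↑v⁻¹ : ℤ_[p]) - 1 := by
    rw [hinv]
    exact ((dvd_pow_self _ (by omega)).mul_left _).neg_right
  refine PadicInt.mem_closure_of_forall_exists_pow_dvd_sub fun m => ?_
  obtain ⟨n, hn⟩ := PadicInt.exists_one_add_prime_pow_sub_dvd hp hy m
  exact ⟨_, ⟨n, rfl⟩, (pow_dvd_pow _ m.le_succ).trans hn⟩
end

section
/- Let p be a prime and let w_m, w_d be polynomials in 𝔽_p[X₁, …, X₈] such that w_m lies in the image of the p-th power expansion map (i.e., w_m is a polynomial in X₁^p, …, X₈^p) and w_m divides the formal partial derivative ∂w_d/∂X_k for every k = 1, …, 8. Then there exist polynomials u ∈ 𝔽_p[X₁, …, X₈] and v in the image of the p-th power expansion map such that w_d = w_m·u + v. -/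
/-!
Over a field `K` of characteristic `p`, `MvPolynomial σ K` is a free module over the subring of
`p`-th powers `expand p (MvPolynomial σ K)`, with basis the monomials `X^e`, `0 ≤ e i < p`;
`expandComponent p e` is the coordinate at `X^e`. The derivation `pderiv k` kills `p`-th powers,
so it is linear over that subring and moves the coordinate at `e` to `e - single k 1`, scaled by
the unit `e k`. Hence if `expand p w` divides every `pderiv k g`, then `w` divides every
coordinate of `g` except the one at `e = 0`, and `g ≡ expand p (expandComponent p 0 g)` modulo
`expand p w`.
-/

namespace Finsupp

variable {σ : Type*} {p : ℕ}

theorem eq_smul_tsub_add_of_smul_add_eq {q d f e : σ →₀ ℕ} (he : ∀ i, e i < p)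
    (h : p • q + d = p • f + e) : d = p • (f - q) + e := by
  ext i
  have hi : p * q i + d i = p * f i + e i := by simpa using DFunLike.congr_fun h i
  have hqf : q i ≤ f i := by nlinarith [he i]
  have := Nat.mul_le_mul_left p hqf
  simp only [coe_add, coe_smul, coe_tsub, Pi.add_apply, Pi.smul_apply, Pi.sub_apply, smul_eq_mul,
    Nat.mul_sub]
  omega

theorem mapRange_mod_smul_add {f e : σ →₀ ℕ} (he : ∀ i, e i < p) :
    mapRange (· % p) (Nat.zero_mod p) (p • f + e) = e := by
  ext i
  simp [Nat.mod_eq_of_lt (he i)]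

theorem smul_mapRange_div_add_mapRange_mod (d : σ →₀ ℕ) :
    p • mapRange (· / p) (Nat.zero_div p) d + mapRange (· % p) (Nat.zero_mod p) d = d := by
  ext i
  simp [Nat.div_add_mod]

theorem smul_add_injective [NeZero p] (e : σ →₀ ℕ) :
    Function.Injective fun f : σ →₀ ℕ => p • f + e :=
  (add_left_injective e).comp (smul_right_injective _ (NeZero.ne p))

end Finsupp

namespace MvPolynomial

variable {σ R : Type*} [CommSemiring R] (p : ℕ) [NeZero p]

noncomputable def expandComponent (e : σ →₀ ℕ) :
    MvPolynomial σ R →ₗ[R] MvPolynomial σ R where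
  toFun g := AddMonoidAlgebra.ofCoeff <|
    (AddMonoidAlgebra.coeff g).comapDomain _ (Finsupp.smul_add_injective (p := p) e).injOn
  map_add' _ _ := by ext; rfl
  map_smul' _ _ := by ext; rfl

variable {p}

@[simp]
theorem coeff_expandComponent (e f : σ →₀ ℕ) (g : MvPolynomial σ R) :
    coeff f (expandComponent p e g) = coeff (p • f + e) g := rfl

theorem expandComponent_monomial_smul_add (e f : σ →₀ ℕ) (c : R) :
    expandComponent p e (monomial (p • f + e) c) = monomial f c := by
  classical
  ext f'
  simp only [coeff_expandComponent, coeff_monomial,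
    (Finsupp.smul_add_injective (p := p) e).eq_iff]

theorem expandComponent_monomial_of_forall_ne {e d : σ →₀ ℕ} (hd : ∀ f, d ≠ p • f + e)
    (c : R) :
    expandComponent p e (monomial d c) = 0 := by
  classical
  ext f
  simp [coeff_monomial, hd f]

theorem expandComponent_expand_mul {e : σ →₀ ℕ} (he : ∀ i, e i < p)
    (a g : MvPolynomial σ R) :
    expandComponent p e (expand p a * g) = a * expandComponent p e g := by
  induction a using MvPolynomial.induction_on' with
  | add a₁ a₂ ih₁ ih₂ => rw [map_add, add_mul, map_add, ih₁, ih₂, add_mul]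
  | monomial q c =>
    induction g using MvPolynomial.induction_on' with
    | add g₁ g₂ ih₁ ih₂ => rw [mul_add, map_add, ih₁, ih₂, map_add, mul_add]
    | monomial d c' =>
      rw [expand_monomial, monomial_mul]
      by_cases hd : ∃ f, d = p • f + e
      · obtain ⟨f, rfl⟩ := hd
        rw [← add_assoc, ← smul_add, expandComponent_monomial_smul_add,
          expandComponent_monomial_smul_add, monomial_mul]
      · push Not at hd
        rw [expandComponent_monomial_of_forall_ne hd, mul_zero,
          expandComponent_monomial_of_forall_ne]
        exact fun f hf => hd (f - q) (Finsupp.eq_smul_tsub_add_of_smul_add_eq he hf)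

theorem expandComponent_pderiv {R : Type*} [CommRing R] [CharP R p] {e : σ →₀ ℕ} {k : σ}
    (hk : e k ≠ 0) (g : MvPolynomial σ R) :
    expandComponent p (e - Finsupp.single k 1) (pderiv k g) =
      (e k : R) • expandComponent p e g := by
  have hle : Finsupp.single k 1 ≤ e := Finsupp.single_le_iff.mpr (Nat.one_le_iff_ne_zero.mpr hk)
  ext f
  rw [coeff_expandComponent, coeff_pderiv, add_assoc, tsub_add_cancel_of_le hle, coeff_smul,
    coeff_expandComponent, smul_eq_mul, mul_comm]
  congr 1
  simp only [Finsupp.coe_add, Finsupp.coe_smul, Finsupp.coe_tsub, Pi.add_apply, Pi.smul_apply,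
    Pi.sub_apply, smul_eq_mul, Finsupp.single_eq_same]
  rw [← Nat.cast_add_one, show p * f k + (e k - 1) + 1 = p * f k + e k by omega]
  simp [CharP.cast_eq_zero]

section Decomposition

variable (σ p) [Fintype σ] [DecidableEq σ]

noncomputable def residues : Finset (σ →₀ ℕ) :=
  Finset.Iic (Finsupp.equivFunOnFinite.symm fun _ => p - 1)

variable {σ p}

theorem mem_residues {e : σ →₀ ℕ} : e ∈ residues σ p ↔ ∀ i, e i < p := by
  simp only [residues, Finset.mem_Iic, Finsupp.le_def]
  exact forall_congr' fun i => Nat.le_sub_one_iff_lt (Nat.pos_of_neZero p)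

theorem sum_expand_expandComponent_mul_monomial (g : MvPolynomial σ R) :
    ∑ e ∈ residues σ p, expand p (expandComponent p e g) * monomial e 1 = g := by
  induction g using MvPolynomial.induction_on' with
  | add g₁ g₂ ih₁ ih₂ => simp only [map_add, add_mul, Finset.sum_add_distrib, ih₁, ih₂]
  | monomial d c =>
    set r := Finsupp.mapRange (· % p) (Nat.zero_mod p) d
    have hd : p • Finsupp.mapRange (· / p) (Nat.zero_div p) d + r = d :=
      Finsupp.smul_mapRange_div_add_mapRange_mod d
    have hr : r ∈ residues σ p := mem_residues.mpr fun i => Nat.mod_lt _ (Nat.pos_of_neZero p)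
    rw [Finset.sum_eq_single_of_mem r hr]
    · rw [← hd, expandComponent_monomial_smul_add, expand_monomial, monomial_mul, mul_one]
    · intro e he her
      rw [expandComponent_monomial_of_forall_ne, map_zero, zero_mul]
      rintro f rfl
      exact her (Finsupp.mapRange_mod_smul_add (mem_residues.mp he)).symm

theorem exists_eq_expand_mul_add_expand {w g : MvPolynomial σ R}
    (hw : ∀ e ∈ residues σ p, e ≠ 0 → w ∣ expandComponent p e g) :
    ∃ u v, g = expand p w * u + expand p v := by
  have h0 : (0 : σ →₀ ℕ) ∈ residues σ p :=
    mem_residues.mpr fun _ => Nat.pos_of_neZero p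
  have hdvd : expand p w ∣
      ∑ e ∈ (residues σ p).erase 0, expand p (expandComponent p e g) * monomial e 1 :=
    Finset.dvd_sum fun e he =>
      (map_dvd _ (hw e (Finset.mem_of_mem_erase he) (Finset.ne_of_mem_erase he))).mul_right _
  obtain ⟨u, hu⟩ := hdvd
  refine ⟨u, expandComponent p 0 g, ?_⟩
  conv_lhs =>
    rw [← sum_expand_expandComponent_mul_monomial (p := p) g, ← Finset.add_sum_erase _ _ h0]
  rw [hu, monomial_zero', C_1, mul_one, add_comm]

end Decomposition

theorem dvd_expandComponent_of_dvd_pderiv {K : Type*} [Field K] [CharP K p] {e : σ →₀ ℕ}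
    (he : ∀ i, e i < p) {k : σ} (hk : e k ≠ 0) {w g : MvPolynomial σ K}
    (hdvd : expand p w ∣ pderiv k g) : w ∣ expandComponent p e g := by
  obtain ⟨h, hh⟩ := hdvd
  have hcomp := congrArg (expandComponent p (e - Finsupp.single k 1)) hh
  rw [expandComponent_pderiv hk,
    expandComponent_expand_mul fun i => tsub_le_self.trans_lt (he i)] at hcomp
  have hk' : (e k : K) ≠ 0 := by
    rw [Ne, CharP.cast_eq_zero_iff K p]
    exact Nat.not_dvd_of_pos_of_lt (Nat.pos_of_ne_zero hk) (he k)
  rw [← inv_smul_smul₀ hk' (expandComponent p e g), hcomp, ← mul_smul_comm]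
  exact dvd_mul_right _ _

end MvPolynomial

theorem stmt_19 (p : ℕ) (hp : p.Prime) (wm wd : MvPolynomial (Fin 8) (ZMod p))
    (hm : ∃ w' : MvPolynomial (Fin 8) (ZMod p), wm = MvPolynomial.expand p w')
    (hdvd : ∀ k : Fin 8, wm ∣ MvPolynomial.pderiv k wd) :
    ∃ (u v' : MvPolynomial (Fin 8) (ZMod p)),
      wd = wm * u + MvPolynomial.expand p v' := by
  have : Fact p.Prime := ⟨hp⟩
  obtain ⟨w, rfl⟩ := hm
  refine MvPolynomial.exists_eq_expand_mul_add_expand fun e he he0 => ?_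
  obtain ⟨k, hk⟩ := Finsupp.ne_iff.mp he0
  exact MvPolynomial.dvd_expandComponent_of_dvd_pderiv (MvPolynomial.mem_residues.mp he) hk
    (hdvd k)
end
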